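/- Let A be an associative unital algebra over ℂ, let θ be a real number, set q = exp(2πiθ), and let μ be a nonzero real number. Suppose x₁, x₂, x₃, x₄ ∈ A satisfy the scaled unit relations x₂·x₁ = x₁·x₂ = (1/μ)·1 and x₄·x₃ = x₃·x₄ = (1/μ)·1. Then the four relations (x₃x₁ = μq·x₁x₃, x₄x₂ = (1/μ)q·x₂x₄, x₄x₁ = μq⁻¹·x₁x₄, x₃x₂ = (1/μ)q⁻¹·x₂x₃) hold if and only if the four relations (x₃x₁x₄ = q·x₁, x₄ = q·x₂x₄x₁, x₄x₁x₃ = q⁻¹·x₁, x₂ = q⁻¹·x₄x₂x₃) hold. -/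
import Mathlib


/-- Basic isomorphism (paper's Lemma 2): given the scaled unit relations
`x₂x₁ = x₁x₂ = (1/μ)·1`, `x₄x₃ = x₃x₄ = (1/μ)·1`, the Sklyanin ∗-algebra
relations are equivalent to the unit-free noncommutative torus relations. -/
theorem sklyanin_scaled_unit_equiv_ncTorus
    {A : Type*} [Ring A] [Algebra ℂ A]
    (θ : ℝ) (q : ℂ) (hq : q = Complex.exp (2 * Real.pi * Complex.I * θ))
    (μ : ℝ) (hμ : μ ≠ 0)
    (x₁ x₂ x₃ x₄ : A)
    (h21 : x₂ * x₁ = ((1 / μ : ℝ) : ℂ) • (1 : A))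
    (h12 : x₁ * x₂ = ((1 / μ : ℝ) : ℂ) • (1 : A))
    (h43 : x₄ * x₃ = ((1 / μ : ℝ) : ℂ) • (1 : A))
    (h34 : x₃ * x₄ = ((1 / μ : ℝ) : ℂ) • (1 : A)) :
    (x₃ * x₁ = ((μ : ℂ) * q) • (x₁ * x₃) ∧
     x₄ * x₂ = (((1 / μ : ℝ) : ℂ) * q) • (x₂ * x₄) ∧
     x₄ * x₁ = ((μ : ℂ) * q⁻¹) • (x₁ * x₄) ∧
     x₃ * x₂ = (((1 / μ : ℝ) : ℂ) * q⁻¹) • (x₂ * x₃)) ↔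
    (x₃ * x₁ * x₄ = q • x₁ ∧ x₄ = q • (x₂ * x₄ * x₁) ∧
     x₄ * x₁ * x₃ = q⁻¹ • x₁ ∧ x₂ = q⁻¹ • (x₄ * x₂ * x₃)) := by
  set c : ℂ := ((1 / μ : ℝ) : ℂ) with hc
  have hμc : (μ : ℂ) ≠ 0 := by exact_mod_cast hμ
  have hmc : (μ : ℂ) * c = 1 := by
    rw [hc]; push_cast; field_simp
  have hcm : c * (μ : ℂ) = 1 := by rw [mul_comm]; exact hmc
  have cancel : ∀ x y : A, c • x = c • y → x = y := by
    intro x y h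
    have := congrArg (fun z : A => (μ : ℂ) • z) h
    simpa [smul_smul, hmc] using this
  constructor
  · rintro ⟨r1, r2, r3, r4⟩
    refine ⟨?_, ?_, ?_, ?_⟩
    · calc x₃ * x₁ * x₄ = ((μ : ℂ) * q) • (x₁ * (x₃ * x₄)) := by
            rw [r1, smul_mul_assoc, mul_assoc]
        _ = ((μ : ℂ) * q * c) • x₁ := by rw [h34, mul_smul_comm, mul_one, smul_smul]
        _ = q • x₁ := by rw [mul_comm ((μ:ℂ)) q, mul_assoc, hmc, mul_one]
    · apply cancel
      calc c • x₄ = x₄ * (x₂ * x₁) := by rw [h21, mul_smul_comm, mul_one]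
        _ = (c * q) • (x₂ * x₄ * x₁) := by
            rw [← mul_assoc, r2, smul_mul_assoc]
        _ = c • (q • (x₂ * x₄ * x₁)) := by rw [smul_smul]
    · calc x₄ * x₁ * x₃ = ((μ : ℂ) * q⁻¹) • (x₁ * (x₄ * x₃)) := by
            rw [r3, smul_mul_assoc, mul_assoc]
        _ = ((μ : ℂ) * q⁻¹ * c) • x₁ := by rw [h43, mul_smul_comm, mul_one, smul_smul]
        _ = q⁻¹ • x₁ := by rw [mul_comm ((μ:ℂ)) q⁻¹, mul_assoc, hmc, mul_one]
    · apply cancel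
      calc c • x₂ = (x₄ * x₃) * x₂ := by rw [h43, smul_mul_assoc, one_mul]
        _ = x₄ * (x₃ * x₂) := by rw [mul_assoc]
        _ = (c * q⁻¹) • (x₄ * x₂ * x₃) := by
            rw [r4, mul_smul_comm, ← mul_assoc]
        _ = c • (q⁻¹ • (x₄ * x₂ * x₃)) := by rw [smul_smul]
  · rintro ⟨t1, t2, t3, t4⟩
    refine ⟨?_, ?_, ?_, ?_⟩
    · apply cancel
      calc c • (x₃ * x₁) = x₃ * x₁ * (x₄ * x₃) := by rw [h43, mul_smul_comm, mul_one]
        _ = (x₃ * x₁ * x₄) * x₃ := by noncomm_ring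
        _ = q • (x₁ * x₃) := by rw [t1, smul_mul_assoc]
        _ = c • (((μ : ℂ) * q) • (x₁ * x₃)) := by
            rw [smul_smul, ← mul_assoc, hcm, one_mul]
    · calc x₄ * x₂ = q • (x₂ * x₄ * (x₁ * x₂)) := by
            nth_rewrite 1 [t2]; rw [smul_mul_assoc, mul_assoc]
        _ = (q * c) • (x₂ * x₄) := by rw [h12, mul_smul_comm, mul_one, smul_smul]
        _ = (c * q) • (x₂ * x₄) := by rw [mul_comm]
    · apply cancel
      calc c • (x₄ * x₁) = x₄ * x₁ * (x₃ * x₄) := by rw [h34, mul_smul_comm, mul_one]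
        _ = (x₄ * x₁ * x₃) * x₄ := by noncomm_ring
        _ = q⁻¹ • (x₁ * x₄) := by rw [t3, smul_mul_assoc]
        _ = c • (((μ : ℂ) * q⁻¹) • (x₁ * x₄)) := by
            rw [smul_smul, ← mul_assoc, hcm, one_mul]
    · calc x₃ * x₂ = q⁻¹ • (x₃ * (x₄ * x₂ * x₃)) := by rw [← mul_smul_comm, ← t4]
        _ = q⁻¹ • ((x₃ * x₄) * x₂ * x₃) := by rw [← mul_assoc, ← mul_assoc]
        _ = (q⁻¹ * c) • (x₂ * x₃) := by
            rw [h34, smul_mul_assoc, smul_mul_assoc, one_mul, smul_smul]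
        _ = (c * q⁻¹) • (x₂ * x₃) := by rw [mul_comm]
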